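/- arXiv:0705.1465 — 2 statements merged into one kernel-verified Lean document; each statement's English description precedes it below -/
import Mathlib

section
/- Subadditivity of the Holevo quantity over tensor factors: let {p_α} be a probability distribution on a finite set and σ_α = σ_{α,1} ⊗ … ⊗ σ_{α,n} product density matrices. Then S(Σ_α p_α σ_α) − Σ_α p_α S(σ_α) ≤ Σ_{k=1}^n [ S(Σ_α p_α σ_{α,k}) − Σ_α p_α S(σ_{α,k}) ]. -/
open Matrix BigOperators
open scoped ComplexOrder

noncomputable section

variable {n m r : Type*} [Fintype n] [DecidableEq n] [Fintype m] [DecidableEq m] [Fintype r] [DecidableEq r]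

/-- A density matrix: positive semidefinite with unit trace. -/
def IsDensity (ρ : Matrix n n ℂ) : Prop := ρ.PosSemidef ∧ ρ.trace = 1

/-- Functional calculus for (Hermitian) matrices, junk value `0` otherwise. -/
noncomputable def matFun (f : ℝ → ℝ) (A : Matrix n n ℂ) : Matrix n n ℂ :=
  if h : A.IsHermitian then
    (h.eigenvectorUnitary : Matrix n n ℂ) *
      Matrix.diagonal (fun i => (f (h.eigenvalues i) : ℂ)) *
      star (h.eigenvectorUnitary : Matrix n n ℂ)
  else 0

/-- Von Neumann entropy (base 2), via eigenvalues; junk value `0` for non-Hermitian input. -/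
noncomputable def vnEntropy (A : Matrix n n ℂ) : ℝ :=
  if h : A.IsHermitian then (∑ i, Real.negMulLog (h.eigenvalues i)) / Real.log 2 else 0

/-- Quantum relative entropy `S(ρ‖σ) = Tr ρ (log ρ - log σ)` (base 2). -/
noncomputable def relEnt (ρ σ : Matrix n n ℂ) : ℝ :=
  ((ρ * matFun Real.log ρ).trace - (ρ * matFun Real.log σ).trace).re / Real.log 2

/-- The extension `φ ⊗ id` of a linear map on matrices to a bipartite system. -/
def tensorExt (φ : Matrix n n ℂ →ₗ[ℂ] Matrix m m ℂ) (M : Matrix (n × r) (n × r) ℂ) :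
    Matrix (m × r) (m × r) ℂ :=
  Matrix.of fun p q => φ (Matrix.of fun i j => M (i, p.2) (j, q.2)) p.1 q.1

/-- Completely positive trace preserving map. -/
def IsCPTP (φ : Matrix n n ℂ →ₗ[ℂ] Matrix m m ℂ) : Prop :=
  (∀ A, (φ A).trace = A.trace) ∧
    (∀ (k : ℕ) (M : Matrix (n × Fin k) (n × Fin k) ℂ), M.PosSemidef → (tensorExt φ M).PosSemidef)

/-- Partial trace over the second factor. -/
def partialTraceR (M : Matrix (n × r) (n × r) ℂ) : Matrix n n ℂ :=
  Matrix.of fun i j => ∑ k, M (i, k) (j, k)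

/-- A pure state: rank-one projection onto a unit vector. -/
def IsPureState (ψ : Matrix n n ℂ) : Prop :=
  ∃ v : n → ℂ, (∑ i, Complex.normSq (v i)) = 1 ∧ ψ = Matrix.vecMulVec v (star v)

end

/-!
For product states the entropy of each member of the ensemble is additive over the factors, and
the marginals of the mixture `∑ α, p α • σ α` are the mixtures of the marginals. Subadditivity
of the von Neumann entropy of the mixture therefore gives the inequality for two factors, and
induction on the number of factors gives it in general.

Subadditivity `S(ω) ≤ S(ω_A) + S(ω_B)` is Klein's inequality computed in the product eigenbasis
of `ω_A ⊗ ω_B`: the diagonal of `ω` in that basis is a doubly stochastic average of the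
eigenvalues of `ω`, its two marginals are the eigenvalues of `ω_A` and of `ω_B`, and
`log x ≤ x - 1` does the rest.
-/

open scoped Kronecker

section Scalar

open Real

variable {K M A B : Type*} [Fintype K] [Fintype M] [Fintype A] [Fintype B]

lemma sum_mul_log_le_of_stochastic {r : K → ℝ} {c : K → M → ℝ} {a : M → ℝ}
    (hr : ∀ k, 0 ≤ r k) (hrs : ∑ k, r k = 1) (hc : ∀ k m, 0 ≤ c k m)
    (hc_row : ∀ k, ∑ m, c k m = 1) (hc_col : ∀ m, ∑ k, c k m ≤ 1)
    (ha : ∀ m, 0 ≤ a m) (has : ∑ m, a m ≤ 1) (hsupp : ∀ m, a m = 0 → ∑ k, r k * c k m = 0) :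
    ∑ m, (∑ k, r k * c k m) * log (a m) ≤ ∑ k, r k * log (r k) := by
  -- `log x ≤ x - 1` at `x = a m / r k`, weighted by `r k * c k m`
  have key : ∀ k m, r k * c k m * log (a m) ≤
      r k * c k m * log (r k) + (c k m * a m - r k * c k m) := by
    intro k m
    rcases (mul_nonneg (hr k) (hc k m)).eq_or_lt with h | h
    · rw [← h]
      nlinarith [mul_nonneg (hc k m) (ha m)]
    have hrk : 0 < r k := pos_of_mul_pos_left h (hc k m)
    have ham : 0 < a m := (ha m).lt_of_ne fun h0 => h.ne' <|
      (Finset.sum_eq_zero_iff_of_nonneg fun k _ => mul_nonneg (hr k) (hc k m)).mp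
        (hsupp m h0.symm) k (Finset.mem_univ k)
    have hlog : log (a m) - log (r k) ≤ a m / r k - 1 := by
      rw [← log_div ham.ne' hrk.ne']
      exact log_le_sub_one_of_pos (div_pos ham hrk)
    have := mul_le_mul_of_nonneg_left hlog h.le
    field_simp at this
    nlinarith
  have hrow : ∀ k, ∑ m, r k * c k m = r k := fun k => by
    rw [← Finset.mul_sum, hc_row, mul_one]
  have hcol : ∑ m, (∑ k, c k m) * a m ≤ ∑ m, a m :=
    Finset.sum_le_sum fun m _ => mul_le_of_le_one_left (ha m) (hc_col m)
  calc ∑ m, (∑ k, r k * c k m) * log (a m)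
      = ∑ k, ∑ m, r k * c k m * log (a m) := by
        simp only [Finset.sum_mul]
        exact Finset.sum_comm
    _ ≤ ∑ k, ∑ m, (r k * c k m * log (r k) + (c k m * a m - r k * c k m)) :=
        Finset.sum_le_sum fun k _ => Finset.sum_le_sum fun m _ => key k m
    _ = ∑ k, r k * log (r k) + (∑ m, (∑ k, c k m) * a m - ∑ k, r k) := by
        simp only [Finset.sum_add_distrib, Finset.sum_sub_distrib, ← Finset.sum_mul, hrow,
          Finset.sum_comm (f := fun k m => c k m * a m)]
    _ ≤ ∑ k, r k * log (r k) := by linarith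

lemma sum_mul_log_mul_of_marginals {d : A × B → ℝ} {p : A → ℝ} {q : B → ℝ}
    (hd : ∀ x, 0 ≤ d x) (hp : ∀ i, ∑ j, d (i, j) = p i) (hq : ∀ j, ∑ i, d (i, j) = q j) :
    ∑ x, d x * log (p x.1 * q x.2) = ∑ i, p i * log (p i) + ∑ j, q j * log (q j) := by
  have hsplit : ∀ x, d x * log (p x.1 * q x.2) = d x * log (p x.1) + d x * log (q x.2) := by
    rintro ⟨i, j⟩
    rcases (hd (i, j)).eq_or_lt with h | h
    · simp [← h]
    have hpi : 0 < p i :=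
      h.trans_le (hp i ▸ Finset.single_le_sum (fun j _ => hd (i, j)) (Finset.mem_univ j))
    have hqj : 0 < q j :=
      h.trans_le (hq j ▸ Finset.single_le_sum (fun i _ => hd (i, j)) (Finset.mem_univ i))
    rw [log_mul hpi.ne' hqj.ne', mul_add]
  simp only [hsplit, Finset.sum_add_distrib, Fintype.sum_prod_type]
  rw [Finset.sum_comm (f := fun i j => d (i, j) * log (q j))]
  simp only [← Finset.sum_mul, hp, hq]

end Scalar

namespace Matrix

variable {ι κ : Type*} [Fintype ι] [DecidableEq ι] [Fintype κ]

open Polynomial in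
lemma IsHermitian.sum_comp_eigenvalues_of_charpoly_eq {A : Matrix ι ι ℂ} (hA : A.IsHermitian)
    (d : κ → ℝ) (h : A.charpoly = ∏ i, (X - C (d i : ℂ))) (f : ℝ → ℝ) :
    ∑ i, f (hA.eigenvalues i) = ∑ i, f (d i) := by
  have hroots := hA.roots_charpoly_eq_eigenvalues
  rw [h, Finset.prod_eq_multiset_prod,
    show (fun i => X - C (d i : ℂ)) = (fun z => X - C z) ∘ (fun i => (d i : ℂ)) from rfl,
    ← Multiset.map_map, roots_multiset_prod_X_sub_C] at hroots
  have := congrArg (fun s => (s.map (f ∘ RCLike.re)).sum) hroots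
  simp only [Multiset.map_map] at this
  rw [Finset.sum_eq_multiset_sum, Finset.sum_eq_multiset_sum]
  convert this.symm using 3 <;> simp

lemma IsHermitian.sum_eigenvalues_eq_one {A : Matrix ι ι ℂ} (hA : A.IsHermitian)
    (h : A.trace = 1) : ∑ i, hA.eigenvalues i = 1 := by
  have := hA.trace_eq_sum_eigenvalues
  rw [h] at this
  simpa using (congrArg Complex.re this).symm

lemma IsHermitian.star_mul_mul_apply_self {A : Matrix ι ι ℂ} (hA : A.IsHermitian)
    (G : Matrix ι ι ℂ) (x : ι) :
    (star G * A * G) x x =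
      ∑ k, hA.eigenvalues k * Complex.normSq ((star G * hA.eigenvectorUnitary) x k) := by
  set T := star G * (hA.eigenvectorUnitary : Matrix ι ι ℂ)
  have hconj : star G * A * G = T * diagonal (RCLike.ofReal ∘ hA.eigenvalues) * star T := by
    conv_lhs => rw [hA.spectral_theorem, Unitary.conjStarAlgAut_apply]
    simp only [T, star_mul, star_star, Matrix.mul_assoc]
  rw [hconj, mul_apply]
  push_cast
  refine Finset.sum_congr rfl fun k _ => ?_
  rw [mul_diagonal, star_apply, Complex.normSq_eq_conj_mul_self]
  simp only [Function.comp_apply, Complex.star_def, RCLike.ofReal_eq_complex_ofReal]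
  ring

lemma IsHermitian.star_eigenvectorUnitary_mul_mul_apply_self {A : Matrix ι ι ℂ}
    (hA : A.IsHermitian) (i : ι) :
    (star (hA.eigenvectorUnitary : Matrix ι ι ℂ) * A * hA.eigenvectorUnitary) i i =
      hA.eigenvalues i := by
  simpa [Unitary.conjStarAlgAut_apply] using
    congrArg (· i i) hA.conjStarAlgAut_star_eigenvectorUnitary

lemma charpoly_mul_mul_star_of_mem_unitary {U : Matrix ι ι ℂ} (hU : U ∈ unitary (Matrix ι ι ℂ))
    (M : Matrix ι ι ℂ) : (U * M * star U).charpoly = M.charpoly := by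
  rw [charpoly_mul_comm, ← Matrix.mul_assoc, Unitary.star_mul_self_of_mem hU, Matrix.one_mul]

lemma sum_normSq_apply_left_of_mem_unitary {T : Matrix ι ι ℂ} (hT : T ∈ unitary (Matrix ι ι ℂ))
    (k : ι) : ∑ x, Complex.normSq (T x k) = 1 := by
  have : (star T * T) k k = 1 := by rw [Unitary.star_mul_self_of_mem hT, one_apply_eq]
  simp only [mul_apply, star_apply] at this
  exact_mod_cast (by simpa [Complex.normSq_eq_conj_mul_self] using this :
    ((∑ x, Complex.normSq (T x k) : ℝ) : ℂ) = 1)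

lemma sum_normSq_apply_right_of_mem_unitary {T : Matrix ι ι ℂ}
    (hT : T ∈ unitary (Matrix ι ι ℂ)) (x : ι) : ∑ k, Complex.normSq (T x k) = 1 := by
  have : (T * star T) x x = 1 := by rw [Unitary.mul_star_self_of_mem hT, one_apply_eq]
  simp only [mul_apply, star_apply] at this
  exact_mod_cast (by simpa [Complex.normSq_eq_conj_mul_self, mul_comm] using this :
    ((∑ k, Complex.normSq (T x k) : ℝ) : ℂ) = 1)

end Matrix

section Entropy

open Matrix

variable {ι κ : Type*} [Fintype ι] [DecidableEq ι] [Fintype κ]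

open Polynomial in
lemma vnEntropy_eq_of_charpoly_eq {A : Matrix ι ι ℂ} (hA : A.IsHermitian) (d : κ → ℝ)
    (h : A.charpoly = ∏ i, (X - C (d i : ℂ))) :
    vnEntropy A = (∑ i, Real.negMulLog (d i)) / Real.log 2 := by
  rw [vnEntropy, dif_pos hA, hA.sum_comp_eigenvalues_of_charpoly_eq d h]

lemma vnEntropy_submatrix_equiv [DecidableEq κ] (M : Matrix ι ι ℂ) (e : κ ≃ ι) :
    vnEntropy (M.submatrix e e) = vnEntropy M := by
  by_cases hM : M.IsHermitian
  · rw [vnEntropy_eq_of_charpoly_eq (hM.submatrix e) hM.eigenvalues, vnEntropy, dif_pos hM]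
    exact (charpoly_reindex e.symm M).trans hM.charpoly_eq
  · have hMe : ¬ (M.submatrix e e).IsHermitian := by rwa [isHermitian_submatrix_equiv]
    rw [vnEntropy, vnEntropy, dif_neg hM, dif_neg hMe]

lemma vnEntropy_kronecker [DecidableEq κ] {ρ : Matrix ι ι ℂ} {τ : Matrix κ κ ℂ}
    (hρ : ρ.IsHermitian) (hρ1 : ρ.trace = 1) (hτ : τ.IsHermitian) (hτ1 : τ.trace = 1) :
    vnEntropy (ρ ⊗ₖ τ) = vnEntropy ρ + vnEntropy τ := by
  set G : Matrix (ι × κ) (ι × κ) ℂ := hρ.eigenvectorUnitary ⊗ₖ hτ.eigenvectorUnitary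
  have hG : G ∈ unitary _ :=
    kronecker_mem_unitary hρ.eigenvectorUnitary.2 hτ.eigenvectorUnitary.2
  have hdiag : ρ ⊗ₖ τ = G * diagonal (fun x =>
      ((hρ.eigenvalues x.1 * hτ.eigenvalues x.2 : ℝ) : ℂ)) * star G := by
    conv_lhs => rw [hρ.spectral_theorem, hτ.spectral_theorem, Unitary.conjStarAlgAut_apply,
      Unitary.conjStarAlgAut_apply]
    simp [G, mul_kronecker_mul, diagonal_kronecker_diagonal, star_eq_conjTranspose,
      conjTranspose_kronecker]
  have hH : (ρ ⊗ₖ τ).IsHermitian := by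
    rw [IsHermitian, conjTranspose_kronecker, hρ, hτ]
  rw [vnEntropy_eq_of_charpoly_eq hH _ (by
      rw [hdiag, charpoly_mul_mul_star_of_mem_unitary hG, charpoly_diagonal]),
    vnEntropy, vnEntropy, dif_pos hρ, dif_pos hτ, ← add_div, Fintype.sum_prod_type]
  simp only [Real.negMulLog_mul, Finset.sum_add_distrib, ← Finset.sum_mul, ← Finset.mul_sum,
    hρ.sum_eigenvalues_eq_one hρ1, hτ.sum_eigenvalues_eq_one hτ1, one_mul]

end Entropy

def partialTraceL {A B : Type*} [Fintype A] (M : Matrix (A × B) (A × B) ℂ) : Matrix B B ℂ :=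
  Matrix.of fun i j => ∑ k, M (k, i) (k, j)

namespace Matrix

variable {A B : Type*}

lemma IsHermitian.partialTraceR [Fintype B] {M : Matrix (A × B) (A × B) ℂ} (hM : M.IsHermitian) :
    (partialTraceR M).IsHermitian := by
  ext i j
  simp only [conjTranspose_apply, _root_.partialTraceR, of_apply, star_sum, hM.apply]

lemma IsHermitian.partialTraceL [Fintype A] {M : Matrix (A × B) (A × B) ℂ} (hM : M.IsHermitian) :
    (partialTraceL M).IsHermitian := by
  ext i j
  simp only [conjTranspose_apply, _root_.partialTraceL, of_apply, star_sum, hM.apply]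

lemma partialTraceR_star_kronecker_mul_mul [Fintype A] [Fintype B] [DecidableEq B]
    (M : Matrix (A × B) (A × B) ℂ) (U : Matrix A A ℂ) {V : Matrix B B ℂ} (hV : V * star V = 1) :
    partialTraceR (star (U ⊗ₖ V) * M * (U ⊗ₖ V)) = star U * partialTraceR M * U := by
  have hV' : ∀ b b', ∑ k, star (V b k) * V b' k = if b' = b then 1 else 0 := fun b b' => by
    simpa [mul_apply, one_apply, mul_comm] using congrFun (congrFun hV b') b
  ext i i'
  calc ∑ k, (star (U ⊗ₖ V) * M * (U ⊗ₖ V)) (i, k) (i', k)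
      = ∑ a', ∑ b', ∑ a, ∑ b, star (U a i) * M (a, b) (a', b') * U a' i' *
          ∑ k, star (V b k) * V b' k := by
        simp only [mul_apply, star_apply, kroneckerMap_apply, star_mul', Fintype.sum_prod_type,
          Finset.sum_mul, Finset.mul_sum]
        rw [Finset.sum_comm]; refine Finset.sum_congr rfl fun a' _ => ?_
        rw [Finset.sum_comm]; refine Finset.sum_congr rfl fun b' _ => ?_
        rw [Finset.sum_comm]; refine Finset.sum_congr rfl fun a _ => ?_
        rw [Finset.sum_comm]; refine Finset.sum_congr rfl fun b _ => ?_
        refine Finset.sum_congr rfl fun k _ => ?_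
        ring
    _ = (star U * partialTraceR M * U) i i' := by
        simp only [hV', mul_ite, mul_one, mul_zero, Finset.sum_ite_eq, Finset.mem_univ, if_true,
          _root_.partialTraceR, mul_apply, of_apply, star_apply, Finset.mul_sum, Finset.sum_mul]
        exact Finset.sum_congr rfl fun a' _ => Finset.sum_comm

lemma partialTraceL_star_kronecker_mul_mul [Fintype A] [Fintype B] [DecidableEq A]
    (M : Matrix (A × B) (A × B) ℂ) {U : Matrix A A ℂ} (hU : U * star U = 1) (V : Matrix B B ℂ) :
    partialTraceL (star (U ⊗ₖ V) * M * (U ⊗ₖ V)) = star V * partialTraceL M * V := by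
  have hU' : ∀ a a', ∑ k, star (U a k) * U a' k = if a' = a then 1 else 0 := fun a a' => by
    simpa [mul_apply, one_apply, mul_comm] using congrFun (congrFun hU a') a
  ext j j'
  calc ∑ k, (star (U ⊗ₖ V) * M * (U ⊗ₖ V)) (k, j) (k, j')
      = ∑ a', ∑ b', ∑ a, ∑ b, star (V b j) * M (a, b) (a', b') * V b' j' *
          ∑ k, star (U a k) * U a' k := by
        simp only [mul_apply, star_apply, kroneckerMap_apply, star_mul', Fintype.sum_prod_type,
          Finset.sum_mul, Finset.mul_sum]
        rw [Finset.sum_comm]; refine Finset.sum_congr rfl fun a' _ => ?_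
        rw [Finset.sum_comm]; refine Finset.sum_congr rfl fun b' _ => ?_
        rw [Finset.sum_comm]; refine Finset.sum_congr rfl fun a _ => ?_
        rw [Finset.sum_comm]; refine Finset.sum_congr rfl fun b _ => ?_
        refine Finset.sum_congr rfl fun k _ => ?_
        ring
    _ = (star V * partialTraceL M * V) j j' := by
        simp only [hU', mul_ite, mul_one, mul_zero, Finset.sum_ite_irrel, Finset.sum_const_zero,
          Finset.sum_ite_eq, Finset.mem_univ, if_true, _root_.partialTraceL, mul_apply, of_apply,
          star_apply, Finset.mul_sum, Finset.sum_mul]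
        rw [Finset.sum_comm]
        exact Finset.sum_congr rfl fun b' _ => Finset.sum_comm

lemma partialTraceR_sum_smul_kronecker [Fintype B] {E : Type*} [Fintype E] (p : E → ℝ)
    (ρ : E → Matrix A A ℂ) {τ : E → Matrix B B ℂ} (hτ : ∀ α, (τ α).trace = 1) :
    partialTraceR (∑ α, p α • ρ α ⊗ₖ τ α) = ∑ α, p α • ρ α := by
  ext i j
  simp only [_root_.partialTraceR, of_apply, sum_apply, smul_apply, kroneckerMap_apply]
  rw [Finset.sum_comm]
  refine Finset.sum_congr rfl fun α _ => ?_
  rw [← Finset.smul_sum, ← Finset.mul_sum]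
  simp only [trace, diag] at hτ
  rw [hτ, mul_one]

lemma partialTraceL_sum_smul_kronecker [Fintype A] {E : Type*} [Fintype E] (p : E → ℝ)
    {ρ : E → Matrix A A ℂ} (τ : E → Matrix B B ℂ) (hρ : ∀ α, (ρ α).trace = 1) :
    partialTraceL (∑ α, p α • ρ α ⊗ₖ τ α) = ∑ α, p α • τ α := by
  ext i j
  simp only [_root_.partialTraceL, of_apply, sum_apply, smul_apply, kroneckerMap_apply]
  rw [Finset.sum_comm]
  refine Finset.sum_congr rfl fun α _ => ?_
  rw [← Finset.smul_sum, ← Finset.sum_mul]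
  simp only [trace, diag] at hρ
  rw [hρ, one_mul]

end Matrix

open Matrix in
theorem vnEntropy_le_partialTraceR_add_partialTraceL {A B : Type*} [Fintype A] [DecidableEq A]
    [Fintype B] [DecidableEq B] {ω : Matrix (A × B) (A × B) ℂ} (hω : IsDensity ω) :
    vnEntropy ω ≤ vnEntropy (partialTraceR ω) + vnEntropy (partialTraceL ω) := by
  have hωH := hω.1.1
  have hAH := hωH.partialTraceR
  have hBH := hωH.partialTraceL
  set r := hωH.eigenvalues
  set p := hAH.eigenvalues
  set q := hBH.eigenvalues
  set U : Matrix A A ℂ := (hAH.eigenvectorUnitary : Matrix A A ℂ)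
  set V : Matrix B B ℂ := (hBH.eigenvectorUnitary : Matrix B B ℂ)
  set G := U ⊗ₖ V
  have hG : G ∈ unitary _ :=
    kronecker_mem_unitary hAH.eigenvectorUnitary.2 hBH.eigenvectorUnitary.2
  set T := star G * hωH.eigenvectorUnitary
  have hT : T ∈ unitary _ :=
    Submonoid.mul_mem _ (Unitary.star_mem hG) hωH.eigenvectorUnitary.2
  set d : A × B → ℝ := fun x => ∑ k, r k * Complex.normSq (T x k)
  have hd : ∀ x, (star G * ω * G) x x = d x := fun x => by
    simp only [hωH.star_mul_mul_apply_self, d, Complex.ofReal_sum, Complex.ofReal_mul]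
    rfl
  have hUp : ∀ i, (star U * partialTraceR ω * U) i i = p i :=
    hAH.star_eigenvectorUnitary_mul_mul_apply_self
  have hVq : ∀ j, (star V * partialTraceL ω * V) j j = q j :=
    hBH.star_eigenvectorUnitary_mul_mul_apply_self
  have hGA : partialTraceR (star G * ω * G) = star U * partialTraceR ω * U :=
    partialTraceR_star_kronecker_mul_mul ω U
      (Unitary.mul_star_self_of_mem hBH.eigenvectorUnitary.2)
  have hGB : partialTraceL (star G * ω * G) = star V * partialTraceL ω * V :=
    partialTraceL_star_kronecker_mul_mul ω
      (Unitary.mul_star_self_of_mem hAH.eigenvectorUnitary.2) V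
  have hdp : ∀ i, ∑ j, d (i, j) = p i := fun i => by
    have := congrArg (· i i) hGA
    simp only [hUp] at this
    simp only [_root_.partialTraceR, of_apply, hd] at this
    exact_mod_cast this
  have hdq : ∀ j, ∑ i, d (i, j) = q j := fun j => by
    have := congrArg (· j j) hGB
    simp only [hVq] at this
    simp only [_root_.partialTraceL, of_apply, hd] at this
    exact_mod_cast this
  have hr0 : ∀ k, 0 ≤ r k := hω.1.eigenvalues_nonneg
  have hrs : ∑ k, r k = 1 := hωH.sum_eigenvalues_eq_one hω.2
  have hd0 : ∀ x, 0 ≤ d x := fun x =>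
    Finset.sum_nonneg fun k _ => mul_nonneg (hr0 k) (Complex.normSq_nonneg _)
  have hds : ∑ x, d x = 1 := by
    simp only [d]
    rw [Finset.sum_comm]
    simp only [← Finset.mul_sum, sum_normSq_apply_left_of_mem_unitary hT, mul_one, hrs]
  have hps : ∑ i, p i = 1 := by rw [← hds, Fintype.sum_prod_type]; simp only [hdp]
  have hqs : ∑ j, q j = 1 := by
    rw [← hds, Fintype.sum_prod_type, Finset.sum_comm]; simp only [hdq]
  have hsupp : ∀ x : A × B, p x.1 * q x.2 = 0 → d x = 0 := by
    rintro ⟨i, j⟩ h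
    rcases mul_eq_zero.1 h with h | h
    · exact (Finset.sum_eq_zero_iff_of_nonneg fun j _ => hd0 (i, j)).1 ((hdp i).trans h) j
        (Finset.mem_univ j)
    · exact (Finset.sum_eq_zero_iff_of_nonneg fun i _ => hd0 (i, j)).1 ((hdq j).trans h) i
        (Finset.mem_univ i)
  have klein := sum_mul_log_le_of_stochastic (a := fun x => p x.1 * q x.2) hr0 hrs
    (fun _ _ => Complex.normSq_nonneg _) (sum_normSq_apply_left_of_mem_unitary hT)
    (fun x => (sum_normSq_apply_right_of_mem_unitary hT x).le)
    (fun x => mul_nonneg (hdp x.1 ▸ Finset.sum_nonneg fun j _ => hd0 (x.1, j))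
      (hdq x.2 ▸ Finset.sum_nonneg fun i _ => hd0 (i, x.2)))
    (by rw [Fintype.sum_prod_type]; simp only [← Finset.mul_sum, hqs, mul_one, hps, le_refl])
    hsupp
  rw [sum_mul_log_mul_of_marginals hd0 hdp hdq] at klein
  rw [vnEntropy, vnEntropy, vnEntropy, dif_pos hωH, dif_pos hAH, dif_pos hBH, ← add_div]
  refine div_le_div_of_nonneg_right ?_ (Real.log_pos one_lt_two).le
  simp only [Real.negMulLog_eq_neg, Finset.sum_neg_distrib]
  linarith

section Density

variable {ι κ : Type*} [Fintype ι] [Fintype κ]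

lemma IsDensity.kronecker {ρ : Matrix ι ι ℂ} {τ : Matrix κ κ ℂ} (hρ : IsDensity ρ)
    (hτ : IsDensity τ) : IsDensity (ρ ⊗ₖ τ) :=
  ⟨hρ.1.kronecker hτ.1, by rw [Matrix.trace_kronecker, hρ.2, hτ.2, mul_one]⟩

lemma IsDensity.submatrix_equiv {ρ : Matrix ι ι ℂ} (hρ : IsDensity ρ) (e : κ ≃ ι) :
    IsDensity (ρ.submatrix e e) :=
  ⟨hρ.1.submatrix e, by rw [Matrix.trace, ← hρ.2, Matrix.trace, ← e.sum_comp]; rfl⟩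

lemma isDensity_sum_smul {E : Type*} [Fintype E] {p : E → ℝ} (hp : ∀ α, 0 ≤ p α)
    (hpsum : ∑ α, p α = 1) {ρ : E → Matrix ι ι ℂ} (hρ : ∀ α, IsDensity (ρ α)) :
    IsDensity (∑ α, p α • ρ α) := by
  refine ⟨Matrix.posSemidef_sum _ fun α _ => (hρ α).1.smul (hp α), ?_⟩
  simp only [Matrix.trace_sum, Matrix.trace_smul, (hρ · |>.2), Complex.real_smul, mul_one]
  exact_mod_cast hpsum

end Density

section Holevo

variable {E : Type*} [Fintype E] {ι κ : Type*} [Fintype ι] [DecidableEq ι] [Fintype κ]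
  [DecidableEq κ]

noncomputable def holevoQuantity (p : E → ℝ) (ρ : E → Matrix ι ι ℂ) : ℝ :=
  vnEntropy (∑ α, p α • ρ α) - ∑ α, p α * vnEntropy (ρ α)

lemma holevoQuantity_const {p : E → ℝ} (hpsum : ∑ α, p α = 1) (ρ : Matrix ι ι ℂ) :
    holevoQuantity p (fun _ => ρ) = 0 := by
  rw [holevoQuantity, ← Finset.sum_smul, ← Finset.sum_mul, hpsum, one_smul, one_mul, sub_self]

lemma holevoQuantity_submatrix_equiv (p : E → ℝ) (ρ : E → Matrix ι ι ℂ) (e : κ ≃ ι) :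
    holevoQuantity p (fun α => (ρ α).submatrix e e) = holevoQuantity p ρ := by
  have hmix : ∑ α, p α • (ρ α).submatrix e e = (∑ α, p α • ρ α).submatrix e e := by
    ext; simp [Matrix.sum_apply]
  simp only [holevoQuantity, hmix, vnEntropy_submatrix_equiv]

lemma holevoQuantity_kronecker_le {p : E → ℝ} (hp : ∀ α, 0 ≤ p α) (hpsum : ∑ α, p α = 1)
    {ρ : E → Matrix ι ι ℂ} {τ : E → Matrix κ κ ℂ} (hρ : ∀ α, IsDensity (ρ α))
    (hτ : ∀ α, IsDensity (τ α)) :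
    holevoQuantity p (fun α => ρ α ⊗ₖ τ α) ≤ holevoQuantity p ρ + holevoQuantity p τ := by
  have hmix := vnEntropy_le_partialTraceR_add_partialTraceL
    (isDensity_sum_smul hp hpsum fun α => (hρ α).kronecker (hτ α))
  rw [Matrix.partialTraceR_sum_smul_kronecker p ρ fun α => (hτ α).2,
    Matrix.partialTraceL_sum_smul_kronecker p τ fun α => (hρ α).2] at hmix
  have hprod : ∀ α, vnEntropy (ρ α ⊗ₖ τ α) = vnEntropy (ρ α) + vnEntropy (τ α) := fun α =>
    vnEntropy_kronecker (hρ α).1.1 (hρ α).2 (hτ α).1.1 (hτ α).2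
  simp only [holevoQuantity, hprod, mul_add, Finset.sum_add_distrib]
  linarith

end Holevo

def piKronecker {n : ℕ} {m : Fin n → Type*} (σ : ∀ k, Matrix (m k) (m k) ℂ) :
    Matrix (∀ k, m k) (∀ k, m k) ℂ :=
  Matrix.of fun f g => ∏ k, σ k (f k) (g k)

section PiKronecker

variable {n : ℕ} {m : Fin n → Type*} [∀ k, Fintype (m k)] [∀ k, DecidableEq (m k)]

lemma piKronecker_fin_zero {m : Fin 0 → Type*} (σ : ∀ k, Matrix (m k) (m k) ℂ) :
    piKronecker σ = 1 := by
  ext f g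
  rw [Subsingleton.elim f g]
  simp [piKronecker]

lemma piKronecker_succ {m : Fin (n + 1) → Type*} (σ : ∀ k, Matrix (m k) (m k) ℂ) :
    piKronecker σ = (σ 0 ⊗ₖ piKronecker fun k => σ k.succ).submatrix
      (Fin.consEquiv m).symm (Fin.consEquiv m).symm := by
  ext f g
  simp only [piKronecker, Matrix.submatrix_apply, Matrix.kroneckerMap_apply, Matrix.of_apply,
    Fin.prod_univ_succ]
  rfl

lemma IsDensity.piKronecker {σ : ∀ k, Matrix (m k) (m k) ℂ} (hσ : ∀ k, IsDensity (σ k)) :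
    IsDensity (piKronecker σ) := by
  induction n with
  | zero =>
    rw [piKronecker_fin_zero]
    exact ⟨.one, by simp [Matrix.trace_one]⟩
  | succ n ih =>
    rw [piKronecker_succ]
    exact ((hσ 0).kronecker (ih fun k => hσ k.succ)).submatrix_equiv _

lemma holevoQuantity_piKronecker_le {E : Type*} [Fintype E] {p : E → ℝ} (hp : ∀ α, 0 ≤ p α)
    (hpsum : ∑ α, p α = 1) {σ : E → ∀ k, Matrix (m k) (m k) ℂ}
    (hσ : ∀ α k, IsDensity (σ α k)) :
    holevoQuantity p (fun α => piKronecker (σ α)) ≤ ∑ k, holevoQuantity p (fun α => σ α k) := by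
  induction n with
  | zero => simp only [piKronecker_fin_zero, holevoQuantity_const hpsum, Finset.univ_eq_empty,
      Finset.sum_empty, le_refl]
  | succ n ih =>
    calc holevoQuantity p (fun α => piKronecker (σ α))
        = holevoQuantity p (fun α => σ α 0 ⊗ₖ piKronecker fun k => σ α k.succ) := by
          simp only [piKronecker_succ, holevoQuantity_submatrix_equiv]
      _ ≤ holevoQuantity p (fun α => σ α 0) +
          holevoQuantity p (fun α => piKronecker fun k => σ α k.succ) :=
          holevoQuantity_kronecker_le hp hpsum (fun α => hσ α 0)
            fun α => IsDensity.piKronecker fun k => hσ α k.succ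
      _ ≤ holevoQuantity p (fun α => σ α 0) +
          ∑ k : Fin n, holevoQuantity p (fun α => σ α k.succ) :=
          add_le_add le_rfl (ih fun α k => hσ α k.succ)
      _ = ∑ k, holevoQuantity p (fun α => σ α k) :=
          (Fin.sum_univ_succ fun k => holevoQuantity p fun α => σ α k).symm

end PiKronecker

/-- Subadditivity of the Holevo quantity over tensor factors of product states. -/
theorem holevo_subadditive_tensor {N n : ℕ} {d : Fin n → ℕ}
    (p : Fin N → ℝ) (hp : ∀ α, 0 ≤ p α) (hpsum : ∑ α, p α = 1)
    (σ : Fin N → (k : Fin n) → Matrix (Fin (d k)) (Fin (d k)) ℂ)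
    (hσ : ∀ α k, IsDensity (σ α k)) :
    vnEntropy (∑ α, p α •
        (Matrix.of fun f g : (k : Fin n) → Fin (d k) => ∏ k, σ α k (f k) (g k)))
      - ∑ α, p α * vnEntropy
        (Matrix.of fun f g : (k : Fin n) → Fin (d k) => ∏ k, σ α k (f k) (g k))
    ≤ ∑ k, (vnEntropy (∑ α, p α • σ α k) - ∑ α, p α * vnEntropy (σ α k)) :=
  holevoQuantity_piKronecker_le hp hpsum hσ
end

section
/- Mixed-channel Holevo quantity bound: for the mixture channel Φ = Σ_i γ_i φ_i acting on an ensemble {p_j, ρ_j}, the Holevo quantity satisfies χ({p_j, Φ(ρ_j)}) ≤ Σ_i γ_i χ({p_j, φ_i(ρ_j)}) + H(γ), where H(γ) = −Σ_i γ_i log γ_i. -/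
open Matrix BigOperators
open scoped ComplexOrder

/-!
Put `σᵢ = ∑ⱼ pⱼ φᵢ(ρⱼ)`, so that the mixture channel sends the average input to `∑ᵢ γᵢ σᵢ`.
The bound then follows from two entropy inequalities for a mixture `ρ̄ = ∑ᵢ γᵢ τᵢ` of states:
concavity `∑ᵢ γᵢ S(τᵢ) ≤ S(ρ̄)`, used for each `j` with `τᵢ = φᵢ(ρⱼ)`, and
`S(ρ̄) ≤ ∑ᵢ γᵢ S(τᵢ) + H(γ)`, used with `τᵢ = σᵢ`.

Since `S(ρ̄) = -∑ᵢ γᵢ Tr τᵢ log ρ̄`, both reduce to termwise bounds coming from `γᵢ τᵢ ≤ ρ̄`: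
Klein's inequality `Tr τ log ρ̄ ≤ Tr τ log τ`, and `log γ + Tr τ log τ ≤ Tr τ log ρ̄`.
In the eigenbases `(uₖ)` of `τ` and `(vₗ)` of `ρ̄` both become inequalities between sums weighted
by the doubly stochastic matrix `|⟪uₖ, vₗ⟫|²`, proved from `log x ≤ x - 1`. For the second one,
testing `γ τ ≤ ρ̄` on `ρ̄⁻¹ uₖ` gives `γ λₖ ⟪uₖ, ρ̄⁻¹ uₖ⟫ ≤ 1`, and Jensen's inequality for `log`
turns this into `log (γ λₖ) ≤ ∑ₗ |⟪uₖ, vₗ⟫|² log μₗ`.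
-/

namespace Matrix

variable {d : Type*} [Fintype d]

lemma star_mulVec_dotProduct_mulVec (W B : Matrix d d ℂ) (x : d → ℂ) :
    star (W *ᵥ x) ⬝ᵥ (B *ᵥ (W *ᵥ x)) = star x ⬝ᵥ ((star W * B * W) *ᵥ x) := by
  rw [star_mulVec, ← dotProduct_mulVec, mulVec_mulVec, dotProduct_mulVec, dotProduct_mulVec,
    vecMul_vecMul, star_eq_conjTranspose, Matrix.mul_assoc, dotProduct_mulVec]

variable [DecidableEq d]

lemma star_single_dotProduct_mulVec_single (M : Matrix d d ℂ) (l : d) :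
    star (Pi.single l 1 : d → ℂ) ⬝ᵥ (M *ᵥ Pi.single l 1) = M l l := by
  simp [Pi.star_single]

lemma sum_normSq_apply_right_eq_one (U : unitaryGroup d ℂ) (k : d) :
    ∑ l, Complex.normSq ((U : Matrix d d ℂ) k l) = 1 := by
  have h := congr_fun (congr_fun (mem_unitaryGroup_iff.mp U.2) k) k
  simp only [mul_apply, star_apply, RCLike.star_def, Complex.mul_conj, one_apply_eq] at h
  exact_mod_cast h

lemma sum_normSq_apply_left_eq_one (U : unitaryGroup d ℂ) (l : d) :
    ∑ k, Complex.normSq ((U : Matrix d d ℂ) k l) = 1 := by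
  have h := congr_fun (congr_fun (mem_unitaryGroup_iff'.mp U.2) l) l
  simp only [mul_apply, star_apply, RCLike.star_def, mul_comm (starRingEnd ℂ _),
    Complex.mul_conj, one_apply_eq] at h
  exact_mod_cast h

lemma re_star_dotProduct_diagonal_mulVec (v : d → ℝ) (x : d → ℂ) :
    (star x ⬝ᵥ (diagonal (fun i => (v i : ℂ)) *ᵥ x)).re = ∑ i, v i * Complex.normSq (x i) := by
  simp only [dotProduct, mulVec_diagonal, Pi.star_apply, Complex.re_sum]
  refine Finset.sum_congr rfl fun i _ => ?_
  rw [RCLike.star_def, mul_left_comm, Complex.conj_mul', ← Complex.ofReal_pow,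
    Complex.sq_norm, ← Complex.ofReal_mul, Complex.ofReal_re]

namespace IsHermitian

variable {A : Matrix d d ℂ}

lemma star_eigenvectorUnitary_mul_mul_eigenvectorUnitary (hA : A.IsHermitian) :
    star (hA.eigenvectorUnitary : Matrix d d ℂ) * A * hA.eigenvectorUnitary =
      diagonal (fun k => (hA.eigenvalues k : ℂ)) := by
  simpa [Unitary.conjStarAlgAut_star_apply, Function.comp_def] using
    hA.conjStarAlgAut_star_eigenvectorUnitary

lemma re_star_dotProduct_mulVec (hA : A.IsHermitian) (x : d → ℂ) :
    (star x ⬝ᵥ (A *ᵥ x)).re = ∑ k, hA.eigenvalues k *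
      Complex.normSq ((star (hA.eigenvectorUnitary : Matrix d d ℂ) *ᵥ x) k) := by
  have hx : x = (hA.eigenvectorUnitary : Matrix d d ℂ) *ᵥ
      (star (hA.eigenvectorUnitary : Matrix d d ℂ) *ᵥ x) := by
    rw [mulVec_mulVec, mem_unitaryGroup_iff.mp hA.eigenvectorUnitary.2, one_mulVec]
  conv_lhs => rw [hx]
  rw [star_mulVec_dotProduct_mulVec, hA.star_eigenvectorUnitary_mul_mul_eigenvectorUnitary,
    re_star_dotProduct_diagonal_mulVec]

lemma trace_mul_matFun (hA : A.IsHermitian) (f : ℝ → ℝ) (B : Matrix d d ℂ) :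
    (B * matFun f A).trace = ∑ l, (f (hA.eigenvalues l) : ℂ) *
      (star (hA.eigenvectorUnitary : Matrix d d ℂ) * B * hA.eigenvectorUnitary) l l := by
  rw [matFun, dif_pos hA, ← Matrix.mul_assoc, ← Matrix.mul_assoc, trace_mul_cycle,
    ← Matrix.mul_assoc, trace]
  simp only [diag_apply, mul_diagonal, mul_comm]

end IsHermitian

end Matrix

namespace Real

variable {ι κ : Type*} [Fintype ι] [Fintype κ]

lemma log_le_log_add_div_sub_one {a b : ℝ} (ha : 0 < a) (hb : 0 < b) :
    log b ≤ log a + b / a - 1 := by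
  have h := log_le_sub_one_of_pos (div_pos hb ha)
  rw [log_div hb.ne' ha.ne'] at h
  linarith

lemma sum_mul_sum_mul_log_le {lam : ι → ℝ} {μ : κ → ℝ} {c : ι → κ → ℝ}
    (hlam : ∀ k, 0 ≤ lam k) (hμ : ∀ l, 0 ≤ μ l) (hc : ∀ k l, 0 ≤ c k l)
    (hrow : ∀ k, ∑ l, c k l = 1) (hcol : ∀ l, ∑ k, c k l = 1) (hsum : ∑ l, μ l ≤ ∑ k, lam k)
    (hsupp : ∀ k l, 0 < lam k → 0 < c k l → 0 < μ l) :
    ∑ k, lam k * ∑ l, c k l * log (μ l) ≤ ∑ k, lam k * log (lam k) := by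
  have hpair : ∀ k l, lam k * (c k l * log (μ l)) ≤
      c k l * (lam k * log (lam k)) + c k l * μ l - lam k * c k l := by
    intro k l
    rcases (hlam k).eq_or_lt with hk | hk
    · simp [← hk, mul_nonneg (hc k l) (hμ l)]
    rcases (hc k l).eq_or_lt with hkl | hkl
    · simp [← hkl]
    have h := log_le_log_add_div_sub_one hk (hsupp k l hk hkl)
    have h' := mul_le_mul_of_nonneg_left h (mul_nonneg hk.le hkl.le)
    field_simp at h'
    nlinarith
  calc ∑ k, lam k * ∑ l, c k l * log (μ l)
      ≤ ∑ k, ∑ l, (c k l * (lam k * log (lam k)) + c k l * μ l - lam k * c k l) := by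
        refine Finset.sum_le_sum fun k _ => ?_
        rw [Finset.mul_sum]
        exact Finset.sum_le_sum fun l _ => hpair k l
    _ = ∑ k, lam k * log (lam k) + ∑ l, (∑ k, c k l) * μ l - ∑ k, lam k := by
        simp only [Finset.sum_sub_distrib, Finset.sum_add_distrib, ← Finset.sum_mul,
          ← Finset.mul_sum, hrow, one_mul, mul_one]
        rw [Finset.sum_comm (f := fun k l => c k l * μ l)]
        simp only [Finset.sum_mul]
    _ ≤ ∑ k, lam k * log (lam k) := by
        simp only [hcol, one_mul]
        linarith

lemma log_le_sum_mul_log {c μ : κ → ℝ} (hc : ∀ l, 0 ≤ c l) (hc1 : ∑ l, c l = 1)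
    (hsupp : ∀ l, 0 < c l → 0 < μ l) {t : ℝ} (ht : 0 < t) (hts : t * ∑ l, c l / μ l ≤ 1) :
    log t ≤ ∑ l, c l * log (μ l) := by
  have hterm : ∀ l, c l * log t ≤ c l * log (μ l) + t * (c l / μ l) - c l := by
    intro l
    rcases (hc l).eq_or_lt with hl | hl
    · simp [← hl]
    have h := mul_le_mul_of_nonneg_left (log_le_log_add_div_sub_one (hsupp l hl) ht) hl.le
    rw [mul_div_left_comm]
    nlinarith
  calc log t = ∑ l, c l * log t := by rw [← Finset.sum_mul, hc1, one_mul]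
    _ ≤ ∑ l, (c l * log (μ l) + t * (c l / μ l) - c l) := Finset.sum_le_sum fun l _ => hterm l
    _ = ∑ l, c l * log (μ l) + (t * ∑ l, c l / μ l - 1) := by
        rw [Finset.sum_sub_distrib, Finset.sum_add_distrib, ← Finset.mul_sum, hc1]; ring
    _ ≤ ∑ l, c l * log (μ l) := by linarith

end Real

section Overlap

variable {κ : Type*} [Fintype κ] [DecidableEq κ] {v : κ → ℂ} {μ : κ → ℝ} {t : ℝ}

lemma mul_normSq_le_of_forall_mul_normSq_dotProduct_le
    (h : ∀ w, t * Complex.normSq (v ⬝ᵥ w) ≤ ∑ l, μ l * Complex.normSq (w l)) (l : κ) :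
    t * Complex.normSq (v l) ≤ μ l := by
  simpa [dotProduct_single_one, Pi.single_apply] using h (Pi.single l 1)

lemma log_le_sum_normSq_mul_log_of_forall (hv : ∑ l, Complex.normSq (v l) = 1)
    (hμ : ∀ l, 0 ≤ μ l) (ht : 0 < t)
    (h : ∀ w, t * Complex.normSq (v ⬝ᵥ w) ≤ ∑ l, μ l * Complex.normSq (w l)) :
    Real.log t ≤ ∑ l, Complex.normSq (v l) * Real.log (μ l) := by
  have hsupp : ∀ l, 0 < Complex.normSq (v l) → 0 < μ l := fun l hl =>
    (mul_pos ht hl).trans_le (mul_normSq_le_of_forall_mul_normSq_dotProduct_le h l)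
  refine Real.log_le_sum_mul_log (fun l => Complex.normSq_nonneg _) hv hsupp ht ?_
  set s := ∑ l, Complex.normSq (v l) / μ l
  -- test `h` on `w = D⁻¹ v̄`, where `D = diag μ` (the junk value `x / 0 = 0` handles `μₗ = 0`)
  have hdot : v ⬝ᵥ (fun l => star (v l) / μ l) = s := by
    simp only [dotProduct, s, Complex.ofReal_sum, Complex.ofReal_div, mul_div_assoc',
      RCLike.star_def, Complex.mul_conj]
  have hnorm : ∑ l, μ l * Complex.normSq (star (v l) / μ l) = s := by
    refine Finset.sum_congr rfl fun l _ => ?_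
    rcases eq_or_ne (μ l) 0 with hl | hl
    · simp [hl]
    · rw [Complex.normSq_div, RCLike.star_def, Complex.normSq_conj, Complex.normSq_ofReal]
      field_simp
  have hs := h fun l => star (v l) / μ l
  rw [hdot, hnorm, Complex.normSq_ofReal] at hs
  have hs0 : 0 ≤ s := Finset.sum_nonneg fun l _ => div_nonneg (Complex.normSq_nonneg _) (hμ l)
  rcases hs0.eq_or_lt with h0 | h0
  · simp [← h0]
  · nlinarith

end Overlap

section EigenbasisChange

variable {d : Type*} [Fintype d] [DecidableEq d]

lemma Matrix.IsHermitian.re_trace_mul_matFun_self {A : Matrix d d ℂ} (hA : A.IsHermitian)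
    (f : ℝ → ℝ) :
    ((A * matFun f A).trace).re = ∑ k, hA.eigenvalues k * f (hA.eigenvalues k) := by
  rw [hA.trace_mul_matFun, hA.star_eigenvectorUnitary_mul_mul_eigenvectorUnitary, Complex.re_sum]
  refine Finset.sum_congr rfl fun k _ => ?_
  rw [diagonal_apply_eq, ← Complex.ofReal_mul, Complex.ofReal_re, mul_comm]

lemma IsDensity.sum_eigenvalues {A : Matrix d d ℂ} (hA : IsDensity A) :
    ∑ k, hA.1.1.eigenvalues k = 1 := by
  have h := hA.2
  rw [hA.1.1.trace_eq_sum_eigenvalues, ← RCLike.ofReal_sum] at h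
  exact RCLike.ofReal_injective (h.trans RCLike.ofReal_one.symm)

variable {τ ρ : Matrix d d ℂ}

noncomputable def eigenbasisChange (hτ : τ.IsHermitian) (hρ : ρ.IsHermitian) : unitaryGroup d ℂ :=
  star hτ.eigenvectorUnitary * hρ.eigenvectorUnitary

lemma re_trace_mul_matFun_eq (hτ : τ.IsHermitian) (hρ : ρ.IsHermitian) (f : ℝ → ℝ) :
    ((τ * matFun f ρ).trace).re = ∑ k, hτ.eigenvalues k *
      ∑ l, Complex.normSq ((eigenbasisChange hτ hρ : Matrix d d ℂ) k l) * f (hρ.eigenvalues l) := by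
  have hdiag : ∀ l, ((star (hρ.eigenvectorUnitary : Matrix d d ℂ) * τ *
      hρ.eigenvectorUnitary) l l).re =
        ∑ k, hτ.eigenvalues k * Complex.normSq ((eigenbasisChange hτ hρ : Matrix d d ℂ) k l) := by
    intro l
    rw [← star_single_dotProduct_mulVec_single (star (hρ.eigenvectorUnitary : Matrix d d ℂ) * τ *
      (hρ.eigenvectorUnitary : Matrix d d ℂ)), ← star_mulVec_dotProduct_mulVec,
      hτ.re_star_dotProduct_mulVec, mulVec_mulVec]
    simp [eigenbasisChange]
  rw [hρ.trace_mul_matFun, Complex.re_sum]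
  simp only [Complex.re_ofReal_mul, hdiag, Finset.mul_sum]
  rw [Finset.sum_comm]
  exact Finset.sum_congr rfl fun k _ => Finset.sum_congr rfl fun l _ => by ring

end EigenbasisChange

section TraceLogBounds

variable {d : Type*} [Fintype d] [DecidableEq d] {τ ρ : Matrix d d ℂ} {γ : ℝ}

lemma mul_eigenvalue_mul_normSq_dotProduct_le (hτ : τ.PosSemidef) (hρ : ρ.IsHermitian)
    (hγ : 0 ≤ γ) (hle : (ρ - γ • τ).PosSemidef) (k : d) (w : d → ℂ) :
    γ * hτ.1.eigenvalues k *
        Complex.normSq ((eigenbasisChange hτ.1 hρ : Matrix d d ℂ) k ⬝ᵥ w) ≤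
      ∑ l, hρ.eigenvalues l * Complex.normSq (w l) := by
  set V : Matrix d d ℂ := (eigenbasisChange hτ.1 hρ : Matrix d d ℂ)
  set U : Matrix d d ℂ := (hρ.eigenvectorUnitary : Matrix d d ℂ)
  have hquad := hle.re_dotProduct_nonneg (U *ᵥ w)
  rw [RCLike.re_to_complex, sub_mulVec, dotProduct_sub, smul_mulVec, dotProduct_smul,
    Complex.sub_re, Complex.real_smul, Complex.re_ofReal_mul, hρ.re_star_dotProduct_mulVec,
    hτ.1.re_star_dotProduct_mulVec, mulVec_mulVec, mulVec_mulVec,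
    mem_unitaryGroup_iff'.mp hρ.eigenvectorUnitary.2, one_mulVec] at hquad
  have hk : hτ.1.eigenvalues k * Complex.normSq ((V *ᵥ w) k) ≤
      ∑ k', hτ.1.eigenvalues k' * Complex.normSq ((V *ᵥ w) k') :=
    Finset.single_le_sum (fun k' _ => mul_nonneg (hτ.eigenvalues_nonneg k')
      (Complex.normSq_nonneg _)) (Finset.mem_univ k)
  have hV : star (hτ.1.eigenvectorUnitary : Matrix d d ℂ) * U = V := rfl
  rw [hV] at hquad
  rw [mul_assoc]
  exact (mul_le_mul_of_nonneg_left hk hγ).trans (by linarith)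

/-- A shadow of the operator monotonicity of `log`: `log (γ τ) ≤ log ρ`, tested against `τ`. -/
theorem log_add_re_trace_mul_log_self_le (hτ : IsDensity τ) (hρ : ρ.PosSemidef) (hγ : 0 < γ)
    (hle : (ρ - γ • τ).PosSemidef) :
    Real.log γ + ((τ * matFun Real.log τ).trace).re ≤ ((τ * matFun Real.log ρ).trace).re := by
  set lam := hτ.1.1.eigenvalues
  set V : Matrix d d ℂ := (eigenbasisChange hτ.1.1 hρ.1 : Matrix d d ℂ)
  rw [hτ.1.1.re_trace_mul_matFun_self, re_trace_mul_matFun_eq hτ.1.1 hρ.1]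
  have hrow : ∀ k, lam k * (Real.log γ + Real.log (lam k)) ≤
      lam k * ∑ l, Complex.normSq (V k l) * Real.log (hρ.1.eigenvalues l) := by
    intro k
    rcases (hτ.1.eigenvalues_nonneg k).eq_or_lt with hk | hk
    · simp [lam, ← hk]
    refine mul_le_mul_of_nonneg_left ?_ hk.le
    rw [← Real.log_mul hγ.ne' hk.ne']
    exact log_le_sum_normSq_mul_log_of_forall (sum_normSq_apply_right_eq_one _ k)
      hρ.eigenvalues_nonneg (mul_pos hγ hk)
      (mul_eigenvalue_mul_normSq_dotProduct_le hτ.1 hρ.1 hγ.le hle k)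
  calc Real.log γ + ∑ k, lam k * Real.log (lam k)
      = ∑ k, lam k * (Real.log γ + Real.log (lam k)) := by
        simp only [mul_add, Finset.sum_add_distrib, ← Finset.sum_mul, lam, hτ.sum_eigenvalues,
          one_mul]
    _ ≤ _ := Finset.sum_le_sum fun k _ => hrow k

theorem re_trace_mul_log_le_re_trace_mul_log_self (hτ : IsDensity τ) (hρ : IsDensity ρ)
    (hγ : 0 < γ) (hle : (ρ - γ • τ).PosSemidef) :
    ((τ * matFun Real.log ρ).trace).re ≤ ((τ * matFun Real.log τ).trace).re := by
  rw [hτ.1.1.re_trace_mul_matFun_self, re_trace_mul_matFun_eq hτ.1.1 hρ.1.1]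
  refine Real.sum_mul_sum_mul_log_le hτ.1.eigenvalues_nonneg hρ.1.eigenvalues_nonneg
    (fun _ _ => Complex.normSq_nonneg _) (sum_normSq_apply_right_eq_one _)
    (sum_normSq_apply_left_eq_one _) (by rw [hρ.sum_eigenvalues, hτ.sum_eigenvalues])
    fun k l hk hkl => ?_
  have h := mul_normSq_le_of_forall_mul_normSq_dotProduct_le
    (mul_eigenvalue_mul_normSq_dotProduct_le hτ.1 hρ.1.1 hγ.le hle k) l
  exact (by positivity : 0 < γ * _ * _).trans_le h

end TraceLogBounds

lemma IsDensity.map {n m : Type*} [Fintype n] [Fintype m]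
    {φ : Matrix n n ℂ →ₗ[ℂ] Matrix m m ℂ} (hφ : IsCPTP φ) {A : Matrix n n ℂ}
    (hA : IsDensity A) : IsDensity (φ A) := by
  refine ⟨?_, by rw [hφ.1, hA.2]⟩
  -- complete positivity with the trivial ancilla `Fin 1`
  exact (hφ.2 1 (A.submatrix Prod.fst Prod.fst) (hA.1.submatrix Prod.fst)).submatrix
    fun a : m => (a, (0 : Fin 1))

lemma posSemidef_sum_smul_sub_smul {d ι : Type*} [Fintype ι] {γ : ι → ℝ}
    {τ : ι → Matrix d d ℂ} (hγ0 : ∀ i, 0 ≤ γ i) (hτ : ∀ i, (τ i).PosSemidef) (i : ι) :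
    (∑ j, γ j • τ j - γ i • τ i).PosSemidef := by
  classical
  rw [← Finset.sum_erase_add _ _ (Finset.mem_univ i), add_sub_cancel_right]
  exact posSemidef_sum _ fun j _ => (hτ j).smul (hγ0 j)

lemma IsDensity.sum_smul {d ι : Type*} [Fintype d] [Fintype ι] {γ : ι → ℝ}
    {τ : ι → Matrix d d ℂ} (hγ0 : ∀ i, 0 ≤ γ i) (hγ1 : ∑ i, γ i = 1)
    (hτ : ∀ i, IsDensity (τ i)) : IsDensity (∑ i, γ i • τ i) := by
  refine ⟨posSemidef_sum _ fun i _ => (hτ i).1.smul (hγ0 i), ?_⟩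
  simp only [trace_sum, trace_smul, (hτ _).2, Complex.real_smul, mul_one]
  exact_mod_cast hγ1

section MixtureEntropy

variable {d ι : Type*} [Fintype d] [DecidableEq d] [Fintype ι] {γ : ι → ℝ} {τ : ι → Matrix d d ℂ}

lemma vnEntropy_eq_neg_re_trace_mul_log {A : Matrix d d ℂ} (hA : A.IsHermitian) :
    vnEntropy A = -((A * matFun Real.log A).trace).re / Real.log 2 := by
  rw [vnEntropy, dif_pos hA, hA.re_trace_mul_matFun_self, ← Finset.sum_neg_distrib]
  simp only [Real.negMulLog, neg_mul]

lemma vnEntropy_sum_smul_eq (h : (∑ i, γ i • τ i).IsHermitian) :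
    vnEntropy (∑ i, γ i • τ i) =
      -(∑ i, γ i * ((τ i * matFun Real.log (∑ j, γ j • τ j)).trace).re) / Real.log 2 := by
  rw [vnEntropy_eq_neg_re_trace_mul_log h]
  simp only [Finset.sum_mul, trace_sum, smul_mul, trace_smul, Complex.re_sum, Complex.real_smul,
    Complex.re_ofReal_mul]

lemma sum_mul_vnEntropy_eq (hτ : ∀ i, (τ i).IsHermitian) :
    ∑ i, γ i * vnEntropy (τ i) =
      -(∑ i, γ i * ((τ i * matFun Real.log (τ i)).trace).re) / Real.log 2 := by
  simp only [vnEntropy_eq_neg_re_trace_mul_log (hτ _), Finset.sum_div, ← Finset.sum_neg_distrib]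
  exact Finset.sum_congr rfl fun i _ => by ring

theorem sum_mul_vnEntropy_le_vnEntropy_sum_smul (hγ0 : ∀ i, 0 ≤ γ i) (hγ1 : ∑ i, γ i = 1)
    (hτ : ∀ i, IsDensity (τ i)) :
    ∑ i, γ i * vnEntropy (τ i) ≤ vnEntropy (∑ i, γ i • τ i) := by
  have hmix := IsDensity.sum_smul hγ0 hγ1 hτ
  rw [vnEntropy_sum_smul_eq hmix.1.1, sum_mul_vnEntropy_eq fun i => (hτ i).1.1]
  refine div_le_div_of_nonneg_right (neg_le_neg (Finset.sum_le_sum fun i _ => ?_))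
    (Real.log_nonneg one_le_two)
  rcases (hγ0 i).eq_or_lt with hi | hi
  · simp [← hi]
  exact mul_le_mul_of_nonneg_left (re_trace_mul_log_le_re_trace_mul_log_self (hτ i) hmix hi
    (posSemidef_sum_smul_sub_smul hγ0 (fun j => (hτ j).1) i)) hi.le

theorem vnEntropy_sum_smul_le (hγ0 : ∀ i, 0 ≤ γ i) (hγ1 : ∑ i, γ i = 1)
    (hτ : ∀ i, IsDensity (τ i)) :
    vnEntropy (∑ i, γ i • τ i) ≤
      ∑ i, γ i * vnEntropy (τ i) + (∑ i, Real.negMulLog (γ i)) / Real.log 2 := by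
  have hmix := IsDensity.sum_smul hγ0 hγ1 hτ
  rw [vnEntropy_sum_smul_eq hmix.1.1, sum_mul_vnEntropy_eq fun i => (hτ i).1.1, ← add_div,
    ← Finset.sum_neg_distrib, ← Finset.sum_neg_distrib, ← Finset.sum_add_distrib]
  refine div_le_div_of_nonneg_right (Finset.sum_le_sum fun i _ => ?_)
    (Real.log_nonneg one_le_two)
  rcases (hγ0 i).eq_or_lt with hi | hi
  · simp [← hi]
  have h := log_add_re_trace_mul_log_self_le (hτ i) hmix.1 hi
    (posSemidef_sum_smul_sub_smul hγ0 (fun j => (hτ j).1) i)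
  rw [Real.negMulLog]
  nlinarith

end MixtureEntropy

/-- Holevo quantity of a mixture channel is bounded by the average of the branch Holevo
quantities plus the Shannon entropy of the mixing distribution. -/
theorem mixture_holevo_bound {dI dO M J : ℕ}
    (φ : Fin M → (Matrix (Fin dI) (Fin dI) ℂ →ₗ[ℂ] Matrix (Fin dO) (Fin dO) ℂ))
    (hφ : ∀ i, IsCPTP (φ i))
    (γ : Fin M → ℝ) (hγ : ∀ i, 0 ≤ γ i) (hγ1 : ∑ i, γ i = 1)
    (p : Fin J → ℝ) (hp : ∀ j, 0 ≤ p j) (hp1 : ∑ j, p j = 1)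
    (ρ : Fin J → Matrix (Fin dI) (Fin dI) ℂ) (hρ : ∀ j, IsDensity (ρ j)) :
    vnEntropy (∑ j, p j • ∑ i, γ i • φ i (ρ j))
        - ∑ j, p j * vnEntropy (∑ i, γ i • φ i (ρ j))
      ≤ ∑ i, γ i * (vnEntropy (∑ j, p j • φ i (ρ j)) - ∑ j, p j * vnEntropy (φ i (ρ j)))
        + (∑ i, Real.negMulLog (γ i)) / Real.log 2 := by
  have hout : ∀ i j, IsDensity (φ i (ρ j)) := fun i j => (hρ j).map (hφ i)
  have hswap : ∑ j, p j • ∑ i, γ i • φ i (ρ j) = ∑ i, γ i • ∑ j, p j • φ i (ρ j) := by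
    simp only [Finset.smul_sum, smul_comm (p _) (γ _)]
    exact Finset.sum_comm
  have hfirst := vnEntropy_sum_smul_le hγ hγ1 fun i => IsDensity.sum_smul hp hp1 (hout i)
  have hsecond : ∑ i, γ i * ∑ j, p j * vnEntropy (φ i (ρ j)) ≤
      ∑ j, p j * vnEntropy (∑ i, γ i • φ i (ρ j)) := by
    simp only [Finset.mul_sum, mul_left_comm (γ _)]
    rw [Finset.sum_comm]
    refine Finset.sum_le_sum fun j _ => ?_
    rw [← Finset.mul_sum]
    exact mul_le_mul_of_nonneg_left
      (sum_mul_vnEntropy_le_vnEntropy_sum_smul hγ hγ1 fun i => hout i j) (hp j)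
  simp only [hswap, mul_sub, Finset.sum_sub_distrib]
  linarith
end
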